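/- arXiv:2307.05064 — 5 statements merged into one kernel-verified Lean document; each statement's English description precedes it below -/
import Mathlib

section
/- In domain semantics with the classical knowledge clause, NTrans holds: for every world w and information state i, [K¬◇p]^{w,i} = 1 iff [K¬p]^{w,i} = 1. -/
/-- Formulas of the modal-epistemic language. -/
inductive Fml where
  | atom : ℕ → Fml
  | neg : Fml → Fml
  | conj : Fml → Fml → Fml
  | dia : Fml → Fml
  | know : Fml → Fml

/-- A classical model for domain semantics: an information model (W, I)
together with an epistemic-alternatives function k with w ∈ k w. -/
structure CModel (W : Type) where
  I : ℕ → Set W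
  k : W → Set W
  k_mem : ∀ w, w ∈ k w

variable {W : Type}

/-- Domain-semantics struth at a world-state pair, with the classical
knowledge clause: [Kφ]^{w,i} = 1 iff k^w saccepts φ. -/
def struth (M : CModel W) : Fml → W → Set W → Prop
  | .atom n, w, _ => w ∈ M.I n
  | .neg φ, w, i => ¬ struth M φ w i
  | .conj φ ψ, w, i => struth M φ w i ∧ struth M ψ w i
  | .dia φ, _, i => ∃ u ∈ i, struth M φ u i
  | .know φ, w, _ => ∀ u ∈ M.k w, struth M φ u (M.k w)

/-- Acceptance: i ⊩ φ iff φ is true at (w, i) for every w ∈ i. -/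
def saccepts (M : CModel W) (i : Set W) (φ : Fml) : Prop :=
  ∀ w ∈ i, struth M φ w i

/-- Domain-semantics struth with the *modified* knowledge clause:
[Kφ]^{w,i} = 1 iff k^w saccepts φ and [φ]^{w,i} = 1. -/
def struthM (M : CModel W) : Fml → W → Set W → Prop
  | .atom n, w, _ => w ∈ M.I n
  | .neg φ, w, i => ¬ struthM M φ w i
  | .conj φ ψ, w, i => struthM M φ w i ∧ struthM M ψ w i
  | .dia φ, _, i => ∃ u ∈ i, struthM M φ u i
  | .know φ, w, i => (∀ u ∈ M.k w, struthM M φ u (M.k w)) ∧ struthM M φ w i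

/-- Acceptance for the modified semantics. -/
def sacceptsM (M : CModel W) (i : Set W) (φ : Fml) : Prop :=
  ∀ w ∈ i, struthM M φ w i

/-- In domain semantics with the classical knowledge clause, NTrans holds:
[K¬◇p]^{w,i} = 1 iff [K¬p]^{w,i} = 1. -/
theorem stmt4 {W : Type} (M : CModel W) (w : W) (i : Set W) (n : ℕ) :
    struth M (.know (.neg (.dia (.atom n)))) w i ↔
      struth M (.know (.neg (.atom n))) w i := by
  simp only [struth]
  constructor
  · intro h u hu hn
    exact h w (M.k_mem w) ⟨u, hu, hn⟩
  · rintro h u hu ⟨v, hv, hn⟩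
    exact h v hv hn
end

section
/- In domain semantics with the classical knowledge clause, Veridicality fails: there exists a classical model, world w, and information state i such that [K◇p]^{w,i}=1 but [◇p]^{w,i}=0. -/
variable {W : Type}

/-- In domain semantics with the classical knowledge clause, Veridicality
fails: some classical model, world and state make K◇p true but ◇p false. -/
theorem stmt5 : ∃ (W : Type) (M : CModel W) (w : W) (i : Set W) (n : ℕ),
    struth M (.know (.dia (.atom n))) w i ∧
    ¬ struth M (.dia (.atom n)) w i := by
  refine ⟨Bool, ⟨fun _ => {true}, fun _ => Set.univ, fun _ => Set.mem_univ _⟩,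
    false, {false}, 0, ?_, ?_⟩
  · intro u _
    exact ⟨true, Set.mem_univ _, rfl⟩
  · rintro ⟨u, hu, hp⟩
    simp [struth] at hu hp
    exact absurd hp (by simp [hu])
end

section
/- In domain semantics with the modified knowledge clause ([Kφ]^{w,i}=1 iff k^w ⊩ φ and [φ]^{w,i}=1), NTrans fails at the level of truth: there is a model, world @, and state i with [K¬p]^{@,i}=1 but [K¬◇p]^{@,i}=0. -/
variable {W : Type}

/-- With the modified knowledge clause, NTrans fails at the level of struth:
some model, world and state make K¬p true but K¬◇p false. -/
theorem stmt6 : ∃ (W : Type) (M : CModel W) (w : W) (i : Set W) (n : ℕ),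
    struthM M (.know (.neg (.atom n))) w i ∧
    ¬ struthM M (.know (.neg (.dia (.atom n)))) w i := by
  refine ⟨Bool, ⟨fun _ => {true}, fun w => {w}, fun w => rfl⟩, false, Set.univ, 0, ?_, ?_⟩
  · constructor
    · intro u hu
      simp only [Set.mem_singleton_iff] at hu
      subst hu
      simp [struthM]
    · simp [struthM]
  · intro h
    exact h.2 ⟨true, trivial, rfl⟩
end

section
/- In domain semantics with the modified knowledge clause, NTrans holds at the level of acceptance: i ⊩ K¬◇p iff i ⊩ K¬p, for every information state i in every classical model. -/
variable {W : Type}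

/-- With the modified knowledge clause, NTrans holds at the level of
acceptance: i ⊩ K¬◇p iff i ⊩ K¬p, in every classical model. -/
theorem stmt7 {W : Type} (M : CModel W) (i : Set W) (n : ℕ) :
    sacceptsM M i (.know (.neg (.dia (.atom n)))) ↔
      sacceptsM M i (.know (.neg (.atom n))) := by
  simp only [sacceptsM, struthM]
  constructor
  · intro h w hw
    obtain ⟨h1, h2⟩ := h w hw
    refine ⟨fun u hu hun => h1 w (M.k_mem w) ⟨u, hu, hun⟩,
      fun hwn => h2 ⟨w, hw, hwn⟩⟩
  · intro h w hw
    exact ⟨fun u hu ⟨v, hv, hvn⟩ => (h w hw).1 v hv hvn,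
      fun ⟨v, hv, hvn⟩ => (h v hv).1 v (M.k_mem v) hvn⟩
end

section
/- In domain semantics with the modified knowledge clause, Generalized Negative Transparency fails: there is a classical model and state i with i ⊩ K¬(p∧q) but i does not accept K¬(p∧◇q). -/
variable {W : Type}

/-- With the modified knowledge clause, Generalized Negative Transparency
fails: some model and state accept K¬(p∧q) but not K¬(p∧◇q). -/
theorem stmt8 : ∃ (W : Type) (M : CModel W) (i : Set W) (np nq : ℕ),
    sacceptsM M i (.know (.neg (.conj (.atom np) (.atom nq)))) ∧
    ¬ sacceptsM M i (.know (.neg (.conj (.atom np) (.dia (.atom nq))))) := by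
  refine ⟨Bool, ⟨fun n w => if n = 0 then w = true else w = false,
    fun _ => Set.univ, fun _ => Set.mem_univ _⟩, Set.univ, 0, 1, ?_, ?_⟩
  · intro w _
    constructor
    · intro u _ h
      exact Bool.noConfusion (h.1.symm.trans h.2)
    · intro h
      exact Bool.noConfusion (h.1.symm.trans h.2)
  · intro h
    have := h true (Set.mem_univ _)
    rcases this with ⟨_, hb⟩
    exact hb ⟨rfl, ⟨false, Set.mem_univ _, rfl⟩⟩
end
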